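/- Let G be a weighted undirected graph with a root r, and suppose every vertex v holds an estimate δ(v) obtained as δ(v) = min over sampled vertices v' reachable from v within √n hops of (d_G(r,v') + d_G^{(√n)}(v',v)), where r itself is sampled. Under event 𝒜 (every canonical shortest path segment of ≥√n hops contains a sampled internal vertex), δ(v) = d_G(r,v) for every vertex v reachable from r. -/

import Mathlib

/-!
Every estimate `d(r,v') + d^(h)(v',v)` is the weight of an actual `r`–`v` walk, so it is at
least `d(r,v)`. Conversely, start from a shortest `r`–`v` path with `i` hops (`r` is sampled).
While the chosen path from the current sampled vertex to `v` has more than `h` hops, it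
contains a sampled vertex `x`; replacing the prefix up to `x` by `d(r,x)` does not increase
the bound and passes to a path with strictly fewer hops. This ends at a sampled vertex whose
path to `v` has at most `h` hops, which is one of the terms of the minimum.
-/

open scoped ENNReal

namespace Stmt11

variable {V : Type*}

/-- Endpoint of a walk starting at `u` with subsequent vertices given by the list. -/
def last : V → List V → V
  | u, [] => u
  | _, x :: xs => last x xs

/-- Weight of a walk starting at `u` with subsequent vertices given by the list. -/
noncomputable def cost (w : V → V → ℝ≥0∞) : V → List V → ℝ≥0∞
  | _, [] => 0
  | u, x :: xs => w u x + cost w x xs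

/-- `h`-hop-limited distance from `u` to `v` (non-edges have weight `⊤`). -/
noncomputable def hdist (w : V → V → ℝ≥0∞) (h : ℕ) (u v : V) : ℝ≥0∞ :=
  ⨅ p ∈ {p : List V | p.length ≤ h ∧ last u p = v}, cost w u p

/-- Shortest-path distance from `u` to `v`. -/
noncomputable def dist (w : V → V → ℝ≥0∞) (u v : V) : ℝ≥0∞ :=
  ⨅ h : ℕ, hdist w h u v

/-- `S` is a set of (at most) `k` closest reachable vertices to `v` (excluding `v`),
with ties broken arbitrarily: members of `S` are reachable and distinct from `v`,
`|S| ≤ k`, every member is at least as close as every reachable non-member, and `S`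
has exactly `k` elements unless it already contains all reachable vertices. -/
def IsKClosest [Fintype V] (w : V → V → ℝ≥0∞) (k : ℕ) (v : V) (S : Finset V) : Prop :=
  (∀ u ∈ S, u ≠ v ∧ dist w v u < ⊤) ∧ S.card ≤ k ∧
  (∀ y ∈ S, ∀ z, z ∉ S → z ≠ v → dist w v z < ⊤ → dist w v y ≤ dist w v z) ∧
  (∀ z, z ∉ S → z ≠ v → dist w v z < ⊤ → S.card = k)

/-- Weight function of the union `G ∪ G^(k)` of the graph with the `k`-shortcut hopset:
hopset edges `(u,v)` (present when `u ∈ S v` or `v ∈ S u`) get weight `d_G(u,v)`. -/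
noncomputable def unionW [Fintype V] [DecidableEq V] (w : V → V → ℝ≥0∞) (S : V → Finset V)
    (u v : V) : ℝ≥0∞ :=
  if u ∈ S v ∨ v ∈ S u then min (w u v) (dist w u v) else w u v


/-- `p` is the canonical `i`-hop-limited shortest `u`–`v` path: it has at most `i`
edges, ends at `v`, has minimum weight (equal to the `i`-limited distance), and among
such paths it has the fewest edges and is lexicographically smallest with respect to
the vertex identifiers `ids` (comparing vertex sequences from the tail `u`). -/
def CanonicalPath (w : V → V → ℝ≥0∞) (ids : V → ℕ) (i : ℕ) (u v : V) (p : List V) : Prop :=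
  p.length ≤ i ∧ last u p = v ∧ cost w u p = hdist w i u v ∧
  ∀ q : List V, q.length ≤ i → last u q = v → cost w u q = hdist w i u v →
    p.length ≤ q.length ∧
    (p.length = q.length → ¬ List.Lex (· < ·) ((u :: q).map ids) ((u :: p).map ids))

lemma last_append (u : V) (a b : List V) : last u (a ++ b) = last (last u a) b := by
  induction a generalizing u with
  | nil => rfl
  | cons x xs ih => exact ih x

lemma last_append_singleton (u x : V) (a : List V) : last u (a ++ [x]) = x := by
  rw [last_append]; rfl

lemma exists_append_last_eq_of_mem (u : V) {x : V} {p : List V} (hx : x ∈ p) :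
    ∃ a b, p = a ++ b ∧ last u a = x ∧ b.length < p.length := by
  obtain ⟨s, t, rfl⟩ := List.append_of_mem hx
  exact ⟨s ++ [x], t, by simp, last_append_singleton u x s, by simp; omega⟩

section Distances

variable (w : V → V → ℝ≥0∞)

lemma cost_append (u : V) (a b : List V) :
    cost w u (a ++ b) = cost w u a + cost w (last u a) b := by
  induction a generalizing u with
  | nil => simp [cost, last]
  | cons x xs ih => simp [cost, last, ih x, add_assoc]

lemma hdist_le_cost {h : ℕ} {u v : V} {p : List V} (hl : p.length ≤ h) (he : last u p = v) :
    hdist w h u v ≤ cost w u p :=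
  iInf₂_le p ⟨hl, he⟩

lemma dist_le_hdist (h : ℕ) (u v : V) : dist w u v ≤ hdist w h u v :=
  iInf_le _ h

lemma dist_self (u : V) : dist w u u = 0 :=
  le_antisymm ((dist_le_hdist w 0 u u).trans (hdist_le_cost w (p := []) le_rfl rfl)) zero_le

lemma dist_last_le (r u : V) (a : List V) :
    dist w r (last u a) ≤ dist w r u + cost w u a := by
  conv_rhs => rw [dist, ENNReal.iInf_add]
  refine le_iInf fun h => ?_
  conv_rhs => rw [hdist, iInf_subtype', ENNReal.iInf_add]
  refine le_iInf fun ⟨p, hl, he⟩ => ?_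
  calc dist w r (last u a) ≤ hdist w (h + a.length) r (last u a) := dist_le_hdist w _ _ _
    _ ≤ cost w r (p ++ a) :=
        hdist_le_cost w (by simpa using hl) (by rw [last_append, he])
    _ = cost w r p + cost w u a := by rw [cost_append, he]

lemma dist_le_add_hdist (r u v : V) (h : ℕ) : dist w r v ≤ dist w r u + hdist w h u v := by
  rw [hdist, iInf_subtype', ENNReal.add_iInf]
  refine le_iInf fun ⟨p, _, he⟩ => ?_
  simpa only [he] using dist_last_le w r u p

def IsHopShortestPath (i : ℕ) (u v : V) (p : List V) : Prop :=
  p.length ≤ i ∧ last u p = v ∧ cost w u p = hdist w i u v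

lemma CanonicalPath.isHopShortestPath {ids : V → ℕ} {i : ℕ} {u v : V} {p : List V}
    (hp : CanonicalPath w ids i u v p) : IsHopShortestPath w i u v p :=
  ⟨hp.1, hp.2.1, hp.2.2.1⟩

variable {w} {P : ℕ → V → V → List V} {V' : Finset V} {h : ℕ}

lemma iInf_sampled_le_dist_add_hdist
    (hP : ∀ i u v, hdist w i u v < ⊤ → IsHopShortestPath w i u v (P i u v))
    (hA : ∀ i u v, hdist w i u v < ⊤ → h ≤ (P i u v).length → ∃ x ∈ P i u v, x ∈ V')
    (r v : V) (i : ℕ) {u : V} (hu : u ∈ V') (hfin : hdist w i u v < ⊤) :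
    ⨅ v' ∈ V', dist w r v' + hdist w h v' v ≤ dist w r u + hdist w i u v := by
  induction i using Nat.strong_induction_on generalizing u with
  | _ i ih =>
  obtain ⟨hlen, hlast, hcost⟩ := hP i u v hfin
  rw [← hcost]
  by_cases hshort : (P i u v).length ≤ h
  · exact (iInf₂_le u hu).trans (add_le_add le_rfl (hdist_le_cost w hshort hlast))
  obtain ⟨x, hxP, hxV'⟩ := hA i u v hfin (le_of_not_ge hshort)
  obtain ⟨a, b, hab, hax, hb⟩ := exists_append_last_eq_of_mem u hxP
  have hsplit : cost w u (P i u v) = cost w u a + cost w x b := by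
    rw [hab, cost_append, hax]
  have hbv : last x b = v := by rwa [hab, last_append, hax] at hlast
  have hbfin : hdist w b.length x v < ⊤ :=
    (hdist_le_cost w le_rfl hbv).trans_lt <|
      le_add_self.trans_lt (hsplit ▸ hcost ▸ hfin)
  calc ⨅ v' ∈ V', dist w r v' + hdist w h v' v
      ≤ dist w r x + hdist w b.length x v := ih _ (hb.trans_le hlen) hxV' hbfin
    _ ≤ dist w r u + cost w u a + cost w x b :=
        add_le_add (hax ▸ dist_last_le w r u a) (hdist_le_cost w le_rfl hbv)
    _ = dist w r u + cost w u (P i u v) := by rw [hsplit, add_assoc]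

lemma dist_eq_iInf_sampled
    (hP : ∀ i u v, hdist w i u v < ⊤ → IsHopShortestPath w i u v (P i u v))
    (hA : ∀ i u v, hdist w i u v < ⊤ → h ≤ (P i u v).length → ∃ x ∈ P i u v, x ∈ V')
    {r : V} (hr : r ∈ V') (v : V) :
    dist w r v = ⨅ v' ∈ V', dist w r v' + hdist w h v' v := by
  refine le_antisymm (le_iInf₂ fun v' _ => ?_) (le_iInf fun i => ?_)
  · exact dist_le_add_hdist w r v' v h
  rcases lt_or_ge (hdist w i r v) ⊤ with hfin | hinf
  · simpa only [dist_self, zero_add] using iInf_sampled_le_dist_add_hdist hP hA r v i hr hfin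
  · exact le_top.trans hinf

end Distances

theorem final_estimates_correct_general [Fintype V] [DecidableEq V]
    (w : V → V → ℝ≥0∞)
    (n : ℕ)
    (ids : V → ℕ)
    (P : ℕ → V → V → List V)
    (hP : ∀ i u v, hdist w i u v < ⊤ → CanonicalPath w ids i u v (P i u v))
    (V' : Finset V)
    (hA : ∀ i u v, hdist w i u v < ⊤ → Nat.sqrt n ≤ (P i u v).length →
      ∃ x ∈ (P i u v).dropLast, x ∈ V')
    (r : V) (hr : r ∈ V')
    (δ : V → ℝ≥0∞)
    (hδ : ∀ v, δ v = ⨅ v' ∈ V', dist w r v' + hdist w (Nat.sqrt n) v' v) :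
    ∀ v, dist w r v < ⊤ → δ v = dist w r v := by
  intro v _
  rw [hδ, dist_eq_iInf_sampled (fun i u v hfin => (hP i u v hfin).isHopShortestPath w)
    (fun i u v hfin hlen => (hA i u v hfin hlen).imp fun _ hx =>
      ⟨List.mem_of_mem_dropLast hx.1, hx.2⟩) hr v]

/-- Under event 𝒜, if every vertex `v` holds the estimate
`δ(v) = min over sampled v' of (d_G(r,v') + d_G^{(√n)}(v',v))`, where the root `r`
is itself sampled, then `δ(v) = d_G(r,v)` for every vertex `v` reachable from `r`. -/
theorem final_estimates_correct [Fintype V] [DecidableEq V]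
    (w : V → V → ℝ≥0∞) (hsymm : ∀ u v, w u v = w v u)
    (n : ℕ) (hn : n = Fintype.card V)
    (ids : V → ℕ) (hids : Function.Injective ids)
    (P : ℕ → V → V → List V)
    (hP : ∀ i u v, hdist w i u v < ⊤ → CanonicalPath w ids i u v (P i u v))
    (V' : Finset V)
    (hA : ∀ i u v, hdist w i u v < ⊤ → Nat.sqrt n ≤ (P i u v).length →
      ∃ x ∈ (P i u v).dropLast, x ∈ V')
    (r : V) (hr : r ∈ V')
    (δ : V → ℝ≥0∞)
    (hδ : ∀ v, δ v = ⨅ v' ∈ V', dist w r v' + hdist w (Nat.sqrt n) v' v) :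
    ∀ v, dist w r v < ⊤ → δ v = dist w r v :=
  final_estimates_correct_general w n ids P hP V' hA r hr δ hδ

end Stmt11
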